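/- Let (P,≤) be a poset, U and U′ up-sets in P, and k a field. Then Hom(k[U′], k[U]) is isomorphic to k^{S}, where S is the set of connected components of U′ that are contained in U. -/

import Mathlib

open CategoryTheory

noncomputable section
attribute [local instance] Classical.propDecidable
set_option linter.unusedSectionVars false

variable (R : Type) [Ring R] {P : Type} [Preorder P]

/-- Condition that a subset is order-convex. -/
def IsConvexSet (I : Set P) : Prop := ∀ ⦃x y z : P⦄, x ∈ I → z ∈ I → x ≤ y → y ≤ z → y ∈ I

/-- The value of the interval persistence module at a point. -/
def intervalObj (I : Set P) (a : P) : Submodule R R :=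
  if a ∈ I then (⊤ : Submodule R R) else ⊥

lemma intervalObj_eq_zero {I : Set P} {a : P} (h : a ∉ I) (x : intervalObj R I a) :
    x = 0 := by
  have hx := x.2
  simp only [intervalObj, if_neg h, Submodule.mem_bot] at hx
  exact Subtype.ext hx

/-- The structure map of the interval module between two degrees. -/
def intervalMapAux (I : Set P) (a b : P) :
    (intervalObj R I a) →ₗ[R] (intervalObj R I b) :=
  if h : a ∈ I ∧ b ∈ I then
    Submodule.inclusion (by simp [intervalObj, h.1, h.2])
  else 0

lemma intervalMapAux_coe {I : Set P} {a b : P} (ha : a ∈ I) (hb : b ∈ I)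
    (x : intervalObj R I a) : ((intervalMapAux R I a b x : R)) = (x : R) := by
  simp [intervalMapAux, ha, hb]

lemma intervalMapAux_of_not {I : Set P} {a b : P} (h : ¬(a ∈ I ∧ b ∈ I))
    (x : intervalObj R I a) : intervalMapAux R I a b x = 0 := by
  simp [intervalMapAux, h]

/-- The interval (indicator) persistence module of a convex set `I`,
as a functor from the preorder `P` to `R`-modules. -/
def intervalModule (I : Set P) (hI : IsConvexSet I) : P ⥤ ModuleCat R where
  obj a := ModuleCat.of R (intervalObj R I a)
  map {a b} f := ModuleCat.ofHom (intervalMapAux R I a b)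
  map_id a := by
    apply ModuleCat.hom_ext
    apply LinearMap.ext
    intro x
    by_cases h : a ∈ I
    · exact Subtype.ext (intervalMapAux_coe R h h x)
    · rw [intervalObj_eq_zero R h x]
      simp
  map_comp {a b c} f g := by
    apply ModuleCat.hom_ext
    apply LinearMap.ext
    intro x
    show intervalMapAux R I a c x = intervalMapAux R I b c (intervalMapAux R I a b x)
    by_cases ha : a ∈ I
    · by_cases hc : c ∈ I
      · have hb : b ∈ I := hI ha hc (leOfHom f) (leOfHom g)
        apply Subtype.ext
        rw [intervalMapAux_coe R ha hc, intervalMapAux_coe R hb hc,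
          intervalMapAux_coe R ha hb]
      · rw [intervalMapAux_of_not R (fun h => hc h.2),
          intervalMapAux_of_not R (fun h => hc h.2)]
    · rw [intervalObj_eq_zero R ha x]
      simp

end

lemma IsConvexSet.of_ordConnected {P : Type} [Preorder P] {s : Set P}
    (h : s.OrdConnected) : IsConvexSet s :=
  fun _ _ _ hx hz hxy hyz => h.out hx hz ⟨hxy, hyz⟩

/-- The zigzag (comparability) setoid on a subset of a preordered set: the equivalence
relation generated by comparability within the subset. -/
def zigzagSetoid {P : Type} [Preorder P] (S : Set P) : Setoid S :=
  Relation.EqvGen.setoid (fun x y : S => (x : P) ≤ y ∨ (y : P) ≤ x)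

/-- The set of zigzag-connected components of a subset of a preordered set. -/
def pi0 {P : Type} [Preorder P] (S : Set P) : Type :=
  Quotient (zigzagSetoid S)


/-! A morphism `η : k[U'] ⟶ k[U]` is, at each `a ∈ U'`, multiplication by the scalar `η_a(1)`.
Since `U` is an up-set, the structure map of `k[U]` along `a ≤ b` is the identity when `a ∈ U`
and has zero source otherwise, so naturality forces these scalars to agree on comparable points of
`U'`: they are constant on zigzag components and vanish on every component that leaves `U`.
Conversely, such a function on components defines a morphism by pointwise multiplication; here
`U'` being an up-set makes the structure maps of `k[U']` identities as well. -/

noncomputable section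

section Zigzag

variable {P : Type} [Preorder P]

lemma zigzagSetoid_le_ker {S : Set P} {β : Type} {f : S → β}
    (hf : ∀ a b : S, (a : P) ≤ b → f a = f b) : zigzagSetoid S ≤ Setoid.ker f :=
  Setoid.eqvGen_le fun a b hab => hab.elim (hf a b) fun hba => (hf b a hba).symm

lemma pi0_mk_eq_of_le {S : Set P} {a b : S} (hab : (a : P) ≤ b) :
    Quotient.mk (zigzagSetoid S) a = Quotient.mk (zigzagSetoid S) b :=
  Quotient.sound (Relation.EqvGen.rel _ _ (Or.inl hab))

abbrev containedComponents (U' U : Set P) : Type :=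
  {C : pi0 U' // ∀ x : U', Quotient.mk (zigzagSetoid U') x = C → (x : P) ∈ U}

lemma extend_val_apply_eq_zero {U' U : Set P} {β : Type} [Zero β]
    (g : containedComponents U' U → β) {C : pi0 U'}
    (hC : ¬∀ x : U', Quotient.mk (zigzagSetoid U') x = C → (x : P) ∈ U) :
    Function.extend Subtype.val g 0 C = 0 :=
  Function.extend_apply' _ _ _ fun ⟨D, hD⟩ => hC (hD ▸ D.2)

open Classical in
def liftToPoints {S : Set P} {β : Type} [Zero β] (F : pi0 S → β) (a : P) : β :=
  if h : a ∈ S then F (Quotient.mk (zigzagSetoid S) ⟨a, h⟩) else 0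

lemma liftToPoints_coe {S : Set P} {β : Type} [Zero β] (F : pi0 S → β) (a : S) :
    liftToPoints F a = F (Quotient.mk (zigzagSetoid S) a) := by
  simp [liftToPoints]

lemma liftToPoints_eq_of_le {S : Set P} (hS : IsUpperSet S) {β : Type} [Zero β] (F : pi0 S → β)
    (a b : P) (hab : a ≤ b) (ha : a ∈ S) : liftToPoints F a = liftToPoints F b := by
  rw [liftToPoints_coe F ⟨a, ha⟩, liftToPoints_coe F ⟨b, hS hab ha⟩]
  exact congrArg F (pi0_mk_eq_of_le hab)

lemma liftToPoints_extend_eq_zero {U' U : Set P} {β : Type} [Zero β]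
    (g : containedComponents U' U → β) (a : P) (ha : a ∉ U) :
    liftToPoints (Function.extend Subtype.val g 0) a = 0 := by
  by_cases ha' : a ∈ U'
  · rw [liftToPoints_coe _ ⟨a, ha'⟩]
    exact extend_val_apply_eq_zero g fun h => ha (h ⟨a, ha'⟩ rfl)
  · simp [liftToPoints, ha']

end Zigzag

namespace intervalObj

variable {R : Type} [Ring R] {P : Type} {I J : Set P} {a : P}

def one (ha : a ∈ I) : intervalObj R I a :=
  ⟨1, by simp [intervalObj, ha]⟩

@[simp]
lemma coe_one (ha : a ∈ I) : ((one ha : intervalObj R I a) : R) = 1 := rfl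

lemma coe_linearMap_apply (ha : a ∈ I) (f : intervalObj R I a →ₗ[R] intervalObj R J a)
    (x : intervalObj R I a) : (f x : R) = x * f (one ha) := by
  have hx : x = (x : R) • one ha := Subtype.ext (by simp)
  conv_lhs => rw [hx, map_smul]
  rfl

lemma mul_mem (c : R) (hc : a ∉ J → c = 0) (x : intervalObj R I a) :
    c * x ∈ intervalObj R J a := by
  by_cases ha : a ∈ J
  · simp [intervalObj, ha]
  · simp [hc ha]

def mulLeft {R : Type} [CommRing R] (c : R) (hc : a ∉ J → c = 0) :
    intervalObj R I a →ₗ[R] intervalObj R J a :=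
  LinearMap.codRestrict _ (c • (intervalObj R I a).subtype) (mul_mem c hc)

@[simp]
lemma coe_mulLeft_apply {R : Type} [CommRing R] (c : R) (hc : a ∉ J → c = 0)
    (x : intervalObj R I a) : (mulLeft c hc x : R) = c * x := rfl

end intervalObj

lemma coe_intervalMapAux_of_isUpperSet {R : Type} [Ring R] {P : Type} [Preorder P] {I : Set P}
    (hI : IsUpperSet I) {a b : P} (hab : a ≤ b) (x : intervalObj R I a) :
    (intervalMapAux R I a b x : R) = x := by
  by_cases ha : a ∈ I
  · exact intervalMapAux_coe R ha (hI hab ha) x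
  · simp [intervalObj_eq_zero R ha x]

namespace intervalModule

variable {R : Type} [CommRing R] {P : Type} [Preorder P] {U U' : Set P}
  {hUc : IsConvexSet U} {hU'c : IsConvexSet U'}

def linearApp (η : intervalModule R U' hU'c ⟶ intervalModule R U hUc) (a : P) :
    intervalObj R U' a →ₗ[R] intervalObj R U a :=
  (η.app a).hom

def homCoeff (η : intervalModule R U' hU'c ⟶ intervalModule R U hUc) (a : U') : R :=
  linearApp η a (intervalObj.one a.2)

lemma coe_linearApp_apply (η : intervalModule R U' hU'c ⟶ intervalModule R U hUc) {a : P}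
    (ha : a ∈ U') (x : intervalObj R U' a) : (linearApp η a x : R) = x * homCoeff η ⟨a, ha⟩ :=
  intervalObj.coe_linearMap_apply ha _ x

lemma homCoeff_eq_zero (η : intervalModule R U' hU'c ⟶ intervalModule R U hUc) {a : U'}
    (ha : (a : P) ∉ U) : homCoeff η a = 0 :=
  congrArg Subtype.val (intervalObj_eq_zero R ha _)

lemma linearApp_naturality (η : intervalModule R U' hU'c ⟶ intervalModule R U hUc) {a b : P}
    (hab : a ≤ b) (x : intervalObj R U' a) :
    linearApp η b (intervalMapAux R U' a b x) = intervalMapAux R U a b (linearApp η a x) :=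
  congrArg (fun f => f.hom x) (η.naturality (homOfLE hab))

lemma homCoeff_eq_of_le (hU : IsUpperSet U)
    (η : intervalModule R U' hU'c ⟶ intervalModule R U hUc) {a b : U'} (hab : (a : P) ≤ b) :
    homCoeff η a = homCoeff η b := by
  have h := congrArg Subtype.val (linearApp_naturality η hab (intervalObj.one a.2))
  rwa [coe_intervalMapAux_of_isUpperSet hU hab, coe_linearApp_apply η b.2,
    intervalMapAux_coe R a.2 b.2, intervalObj.coe_one, one_mul, eq_comm] at h

lemma homCoeff_add (η η' : intervalModule R U' hU'c ⟶ intervalModule R U hUc) (a : U') :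
    homCoeff (η + η') a = homCoeff η a + homCoeff η' a := rfl

lemma homCoeff_smul (c : R) (η : intervalModule R U' hU'c ⟶ intervalModule R U hUc) (a : U') :
    homCoeff (c • η) a = c * homCoeff η a := rfl

lemma hom_ext {η η' : intervalModule R U' hU'c ⟶ intervalModule R U hUc}
    (h : ∀ a, homCoeff η a = homCoeff η' a) : η = η' := by
  ext a x
  change linearApp η a x = linearApp η' a x
  by_cases ha : a ∈ U'
  · exact Subtype.ext <| (coe_linearApp_apply η ha x).trans <|
      (congrArg _ (h ⟨a, ha⟩)).trans (coe_linearApp_apply η' ha x).symm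
  · rw [intervalObj_eq_zero R ha x, map_zero, map_zero]

lemma mulLeft_intervalMapAux (hU : IsUpperSet U) (hU' : IsUpperSet U') {c : P → R}
    (hc : ∀ a, a ∉ U → c a = 0) (hconst : ∀ a b, a ≤ b → a ∈ U' → c a = c b) {a b : P}
    (hab : a ≤ b) (x : intervalObj R U' a) :
    intervalObj.mulLeft (c b) (hc b) (intervalMapAux R U' a b x) =
      intervalMapAux R U a b (intervalObj.mulLeft (c a) (hc a) x) := by
  refine Subtype.ext ?_
  rw [coe_intervalMapAux_of_isUpperSet hU hab, intervalObj.coe_mulLeft_apply,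
    intervalObj.coe_mulLeft_apply, coe_intervalMapAux_of_isUpperSet hU' hab]
  by_cases ha : a ∈ U'
  · rw [hconst a b hab ha]
  · simp [intervalObj_eq_zero R ha x]

def ofCoeff (hU : IsUpperSet U) (hU' : IsUpperSet U') (c : P → R) (hc : ∀ a, a ∉ U → c a = 0)
    (hconst : ∀ a b, a ≤ b → a ∈ U' → c a = c b) :
    intervalModule R U' hU'c ⟶ intervalModule R U hUc where
  app a := ModuleCat.ofHom (intervalObj.mulLeft (c a) (hc a))
  naturality a b f := by
    ext x
    exact mulLeft_intervalMapAux hU hU' hc hconst (leOfHom f) x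

lemma homCoeff_ofCoeff (hU : IsUpperSet U) (hU' : IsUpperSet U') (c : P → R)
    (hc : ∀ a, a ∉ U → c a = 0) (hconst : ∀ a b, a ≤ b → a ∈ U' → c a = c b) (a : U') :
    homCoeff (ofCoeff (hUc := hUc) (hU'c := hU'c) hU hU' c hc hconst) a = c a :=
  mul_one _

def componentCoeff (hU : IsUpperSet U) (η : intervalModule R U' hU'c ⟶ intervalModule R U hUc) :
    pi0 U' → R :=
  Quotient.lift (homCoeff η) fun _ _ h =>
    zigzagSetoid_le_ker (fun _ _ => homCoeff_eq_of_le hU η) h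

lemma componentCoeff_add (hU : IsUpperSet U)
    (η η' : intervalModule R U' hU'c ⟶ intervalModule R U hUc) :
    componentCoeff hU (η + η') = componentCoeff hU η + componentCoeff hU η' :=
  funext <| Quotient.ind fun a => homCoeff_add η η' a

lemma componentCoeff_smul (hU : IsUpperSet U) (c : R)
    (η : intervalModule R U' hU'c ⟶ intervalModule R U hUc) :
    componentCoeff hU (c • η) = c • componentCoeff hU η :=
  funext <| Quotient.ind fun a => homCoeff_smul c η a

lemma extend_componentCoeff (hU : IsUpperSet U)
    (η : intervalModule R U' hU'c ⟶ intervalModule R U hUc) :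
    Function.extend Subtype.val (fun C : containedComponents U' U => componentCoeff hU η C.1) 0 =
      componentCoeff hU η := by
  funext C
  by_cases hC : ∀ x : U', Quotient.mk (zigzagSetoid U') x = C → (x : P) ∈ U
  · exact Subtype.val_injective.extend_apply
      (fun C : containedComponents U' U => componentCoeff hU η C.1) 0 ⟨C, hC⟩
  · rw [extend_val_apply_eq_zero _ hC]
    push Not at hC
    obtain ⟨x, rfl, hx⟩ := hC
    exact (homCoeff_eq_zero η hx).symm

lemma componentCoeff_ofCoeff (hU : IsUpperSet U) (hU' : IsUpperSet U') (F : pi0 U' → R)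
    (hc : ∀ a, a ∉ U → liftToPoints F a = 0) :
    componentCoeff hU (ofCoeff (hUc := hUc) (hU'c := hU'c) hU hU' (liftToPoints F) hc
      (liftToPoints_eq_of_le hU' F)) = F :=
  funext <| Quotient.ind fun a => (homCoeff_ofCoeff ..).trans (liftToPoints_coe F a)

def homEquiv (hU : IsUpperSet U) (hU' : IsUpperSet U') :
    (intervalModule R U' hU'c ⟶ intervalModule R U hUc) ≃ₗ[R] (containedComponents U' U → R) where
  toFun η C := componentCoeff hU η C.1
  map_add' η η' := funext fun C => congrFun (componentCoeff_add hU η η') C.1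
  map_smul' c η := funext fun C => congrFun (componentCoeff_smul hU c η) C.1
  invFun g := ofCoeff hU hU' (liftToPoints (Function.extend Subtype.val g 0))
    (liftToPoints_extend_eq_zero g) (liftToPoints_eq_of_le hU' _)
  left_inv η := hom_ext fun a => by
    rw [homCoeff_ofCoeff, liftToPoints_coe, extend_componentCoeff]
    rfl
  right_inv g := funext fun C =>
    (congrFun (componentCoeff_ofCoeff hU hU' _ _) C.1).trans
      (Subtype.val_injective.extend_apply g 0 C)

end intervalModule

end

/-- For up-sets `U'` and `U` in a poset, `Hom(k[U'], k[U])` is isomorphic to the space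
of `k`-valued functions on the set of connected components of `U'` that are contained
in `U`. -/
theorem hom_upset_upset (k : Type) [Field k] {P : Type} [PartialOrder P]
    (U U' : Set P) (hU : IsUpperSet U) (hU' : IsUpperSet U') :
    Nonempty ((intervalModule k U' (fun _ _ _ hx _ hxy _ => hU' hxy hx) ⟶
        intervalModule k U (fun _ _ _ hx _ hxy _ => hU hxy hx)) ≃ₗ[k]
      ({C : pi0 U' // ∀ x : U', Quotient.mk (zigzagSetoid U') x = C → (x : P) ∈ U} → k)) :=
  ⟨intervalModule.homEquiv hU hU'⟩
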